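/- Let Y be a random variable taking values in the positive reals such that X = log₁₀ Y has probability density function g : ℝ → ℝ, and suppose g†(x) = Σ_{k ∈ ℤ} g(x + k) equals 1 for almost every x ∈ [0,1) (equivalently, the fractional part of log₁₀ Y is uniformly distributed on [0,1), i.e., Y is Benford). Then for every n ≥ 1 and all digits d₁ ∈ {1,…,9}, d₂,…,dₙ ∈ {0,…,9}, E[S_{d₁⋯dₙ} Y] = 10^{1−n}/ln 10. In particular, this expectation does not depend on the digit tuple (sum invariance). -/

import Mathlib

open MeasureTheory Real

/-- The base-10 significand `S(y) = 10 ^ (log₁₀ y − ⌊log₁₀ y⌋) ∈ [1,10)`. -/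
noncomputable def signif (y : ℝ) : ℝ :=
  (10 : ℝ) ^ (Real.logb 10 y - (⌊Real.logb 10 y⌋ : ℝ))

/-- `d : Fin n → ℕ` is a valid digit tuple: every digit is at most 9 and the
leading digit (index 0) is at least 1. -/
def IsDigitTuple (n : ℕ) (d : Fin n → ℕ) : Prop :=
  (∀ i, d i ≤ 9) ∧ ∀ i : Fin n, (i : ℕ) = 0 → 1 ≤ d i

/-- `xₙ = 10^(n−1) d₁ + 10^(n−2) d₂ + ⋯ + dₙ` for a digit tuple `d`. -/
def digitVal (n : ℕ) (d : Fin n → ℕ) : ℕ :=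
  ∑ i : Fin n, d i * 10 ^ (n - 1 - (i : ℕ))

/-- `y > 0` has first `n` significant digits given by the tuple `d` iff
`⌊10^(n−1) · S(y)⌋ = xₙ`. -/
def HasFirstDigits (n : ℕ) (d : Fin n → ℕ) (y : ℝ) : Prop :=
  ⌊(10 : ℝ) ^ (n - 1) * signif y⌋ = (digitVal n d : ℤ)

/-- A random variable `Y` on `(Ω, P)` is `n`-digit Benford if for every valid
digit tuple `d`, the probability that the first `n` significant digits of `Y`
are `d₁, …, dₙ` equals `log₁₀ (1 + 1/xₙ)`. -/
def NDigitBenford {Ω : Type*} [MeasurableSpace Ω] (P : Measure Ω) (Y : Ω → ℝ)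
    (n : ℕ) : Prop :=
  ∀ d : Fin n → ℕ, IsDigitTuple n d →
    P {ω | HasFirstDigits n d (Y ω)}
      = ENNReal.ofReal (Real.logb 10 (1 + 1 / (digitVal n d : ℝ)))

/-- The expected significand sum `E[S_{d₁⋯dₙ} Y]`: the expectation of `S(Y)`
restricted to the event that the first `n` significant digits of `Y` are `d`. -/
noncomputable def expSignifSum {Ω : Type*} [MeasurableSpace Ω] (P : Measure Ω)
    (Y : Ω → ℝ) (n : ℕ) (d : Fin n → ℕ) : ℝ :=
  ∫ ω, Set.indicator {ω | HasFirstDigits n d (Y ω)} (fun ω => signif (Y ω)) ω ∂P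

/-! With `X = log₁₀ Y`, both the digit event and `S(Y)` are functions of `u = Int.fract X`: the
event is `10ⁿ⁻¹ · 10ᵘ ∈ [xₙ, xₙ + 1)` and `S(Y) = 10ᵘ`. Cutting ℝ into the intervals `[k, k + 1)`
and translating each back to `[0, 1)`, the wrapping condition `Σₖ g(u + k) = 1` says exactly that
`Int.fract X` is uniform on `[0, 1)`. The expectation is therefore `∫ 10ᵘ du` over
`[log₁₀ (xₙ / 10ⁿ⁻¹), log₁₀ ((xₙ + 1) / 10ⁿ⁻¹))`, which is `((xₙ + 1) - xₙ) / (10ⁿ⁻¹ ln 10)`. -/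

open scoped ENNReal

namespace IsDigitTuple

variable {n : ℕ} {d : Fin n → ℕ}

theorem pow_le_digitVal (hd : IsDigitTuple n d) (hn : 1 ≤ n) : 10 ^ (n - 1) ≤ digitVal n d := by
  have h0 : 0 < n := hn
  calc 10 ^ (n - 1) ≤ d ⟨0, h0⟩ * 10 ^ (n - 1 - 0) := by
        simpa using Nat.mul_le_mul_right (10 ^ (n - 1)) (hd.2 ⟨0, h0⟩ rfl)
    _ ≤ digitVal n d :=
        Finset.single_le_sum (f := fun i : Fin n => d i * 10 ^ (n - 1 - (i : ℕ)))
          (fun _ _ => Nat.zero_le _) (Finset.mem_univ _)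

theorem digitVal_lt_pow (hd : IsDigitTuple n d) : digitVal n d < 10 ^ n := by
  have hle : digitVal n d ≤ (∑ j ∈ Finset.range n, 10 ^ j) * 9 := by
    calc digitVal n d ≤ ∑ i : Fin n, 9 * 10 ^ (n - 1 - (i : ℕ)) :=
          Finset.sum_le_sum fun i _ => Nat.mul_le_mul_right _ (hd.1 i)
      _ = (∑ j ∈ Finset.range n, 10 ^ j) * 9 := by
          rw [Fin.sum_univ_eq_sum_range (fun i => 9 * 10 ^ (n - 1 - i)), ← Finset.mul_sum,
            Finset.sum_range_reflect (fun j => 10 ^ j), mul_comm]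
  have hgeom := geom_sum_mul_add 9 n
  norm_num at hgeom
  omega

end IsDigitTuple

theorem setOf_floor_mul_rpow_eq {b c : ℝ} (hb : 1 < b) (hc : 0 < c) {m : ℤ} (hm : 0 < m) :
    {u : ℝ | ⌊c * b ^ u⌋ = m} = Set.Ico (logb b (m / c)) (logb b ((m + 1) / c)) := by
  have hm' : (0 : ℝ) < m := by exact_mod_cast hm
  have hm1 : (0 : ℝ) < m + 1 := by linarith
  ext u
  simp only [Set.mem_ofPred_eq, Set.mem_Ico, Int.floor_eq_iff,
    logb_le_iff_le_rpow hb (div_pos hm' hc), lt_logb_iff_rpow_lt hb (div_pos hm1 hc),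
    div_le_iff₀' hc, lt_div_iff₀' hc]

theorem integral_rpow_Ico_logb {b p q : ℝ} (hb : 1 < b) (hp : 0 < p) (hpq : p ≤ q) :
    ∫ u in Set.Ico (logb b p) (logb b q), b ^ u = (q - p) / log b := by
  have hb0 : 0 < b := by linarith
  have hlog : log b ≠ 0 := (log_pos hb).ne'
  have hderiv : ∀ u : ℝ, HasDerivAt (fun u => b ^ u / log b) (b ^ u) u := fun u => by
    simpa [hlog] using ((hasStrictDerivAt_const_rpow hb0 u).hasDerivAt).div_const (log b)
  rw [setIntegral_congr_set Ico_ae_eq_Ioc,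
    ← intervalIntegral.integral_of_le (logb_le_logb_of_le hb hp hpq),
    intervalIntegral.integral_eq_sub_of_hasDerivAt (fun u _ => hderiv u)
      ((continuous_const_rpow hb0.ne').intervalIntegrable _ _),
    rpow_logb hb0 (by linarith) (by linarith), rpow_logb hb0 hb.ne' hp, sub_div]

theorem setLIntegral_Ico_intCast (f : ℝ → ℝ≥0∞) (k : ℤ) :
    ∫⁻ x in Set.Ico (k : ℝ) (k + 1), f x = ∫⁻ u in Set.Ico 0 1, f (u + k) := by
  have hpre : (· + (k : ℝ)) ⁻¹' Set.Ico (k : ℝ) (k + 1) = Set.Ico 0 1 := by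
    rw [Set.preimage_add_const_Ico]; norm_num
  rw [← hpre, (measurePreserving_add_right volume (k : ℝ)).setLIntegral_comp_preimage_emb
    (measurableEmbedding_addRight _)]

theorem lintegral_eq_tsum_setLIntegral_Ico (f : ℝ → ℝ≥0∞) :
    ∫⁻ x, f x = ∑' k : ℤ, ∫⁻ u in Set.Ico 0 1, f (u + k) := by
  rw [← setLIntegral_univ, ← iUnion_Ico_intCast ℝ,
    lintegral_iUnion (fun _ => measurableSet_Ico) (Set.pairwise_disjoint_Ico_intCast ℝ)]
  exact tsum_congr (setLIntegral_Ico_intCast f)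

theorem lintegral_comp_fract_withDensity_of_tsum_eq_one {g : ℝ → ℝ} (hg0 : ∀ x, 0 ≤ g x)
    (hg : AEMeasurable g)
    (hwrap : ∀ᵐ x ∂(volume.restrict (Set.Ico (0 : ℝ) 1)), ∑' k : ℤ, g (x + k) = 1)
    {h : ℝ → ℝ≥0∞} (hh : Measurable h) :
    ∫⁻ x, h (Int.fract x) ∂volume.withDensity (fun x => ENNReal.ofReal (g x))
      = ∫⁻ u in Set.Ico 0 1, h u := by
  have hg_shift (k : ℤ) : AEMeasurable (fun u : ℝ => g (u + k)) :=
    hg.comp_quasiMeasurePreserving (measurePreserving_add_right volume _).quasiMeasurePreserving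
  have hwrap' : ∀ᵐ u ∂(volume.restrict (Set.Ico (0 : ℝ) 1)),
      ∑' k : ℤ, ENNReal.ofReal (g (u + k)) = 1 := by
    filter_upwards [hwrap] with u hu
    have hsumm : Summable fun k : ℤ => g (u + k) := by
      by_contra hns
      rw [tsum_eq_zero_of_not_summable hns] at hu
      exact zero_ne_one hu
    rw [← ENNReal.ofReal_tsum_of_nonneg (fun _ => hg0 _) hsumm, hu, ENNReal.ofReal_one]
  calc ∫⁻ x, h (Int.fract x) ∂volume.withDensity (fun x => ENNReal.ofReal (g x))
      = ∫⁻ x, ENNReal.ofReal (g x) * h (Int.fract x) :=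
        lintegral_withDensity_eq_lintegral_mul₀ hg.ennreal_ofReal
          (hh.comp measurable_fract).aemeasurable
    _ = ∑' k : ℤ, ∫⁻ u in Set.Ico 0 1, ENNReal.ofReal (g (u + k)) * h (Int.fract (u + k)) :=
        lintegral_eq_tsum_setLIntegral_Ico _
    _ = ∑' k : ℤ, ∫⁻ u in Set.Ico 0 1, ENNReal.ofReal (g (u + k)) * h u := by
        refine tsum_congr fun k => setLIntegral_congr_fun measurableSet_Ico fun u hu => ?_
        rw [Int.fract_add_intCast, Int.fract_eq_self.2 hu]
    _ = ∫⁻ u in Set.Ico 0 1, ∑' k : ℤ, ENNReal.ofReal (g (u + k)) * h u :=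
        (lintegral_tsum fun k => ((hg_shift k).ennreal_ofReal.mul hh.aemeasurable).restrict).symm
    _ = ∫⁻ u in Set.Ico 0 1, h u :=
        lintegral_congr_ae <| hwrap'.mono fun u hu => by
          simp only [ENNReal.tsum_mul_right, hu, one_mul]

noncomputable def digitSignifOfFract (n : ℕ) (d : Fin n → ℕ) : ℝ → ℝ :=
  {u : ℝ | ⌊(10 : ℝ) ^ (n - 1) * (10 : ℝ) ^ u⌋ = (digitVal n d : ℤ)}.indicator
    fun u => (10 : ℝ) ^ u

theorem indicator_hasFirstDigits_signif (n : ℕ) (d : Fin n → ℕ) (y : ℝ) :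
    {y | HasFirstDigits n d y}.indicator signif y
      = digitSignifOfFract n d (Int.fract (logb 10 y)) :=
  rfl

theorem measurable_digitSignifOfFract (n : ℕ) (d : Fin n → ℕ) :
    Measurable (digitSignifOfFract n d) := by
  have h : Measurable fun u : ℝ => (10 : ℝ) ^ u := measurable_const.pow measurable_id
  exact h.indicator ((Int.measurable_floor.comp (measurable_const.mul h))
    (measurableSet_singleton _))

theorem digitSignifOfFract_nonneg (n : ℕ) (d : Fin n → ℕ) : 0 ≤ digitSignifOfFract n d :=
  Set.indicator_nonneg fun _ _ => by positivity

theorem IsDigitTuple.setOf_floor_eq_digitVal {n : ℕ} {d : Fin n → ℕ} (hd : IsDigitTuple n d)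
    (hn : 1 ≤ n) :
    {u : ℝ | ⌊(10 : ℝ) ^ (n - 1) * (10 : ℝ) ^ u⌋ = (digitVal n d : ℤ)}
      = Set.Ico (logb 10 (digitVal n d / 10 ^ (n - 1)))
          (logb 10 ((digitVal n d + 1) / 10 ^ (n - 1))) := by
  have hpos : (0 : ℤ) < digitVal n d := by
    have := hd.pow_le_digitVal hn
    have := Nat.one_le_pow (n - 1) 10 (by norm_num)
    omega
  simpa using setOf_floor_mul_rpow_eq (by norm_num) (by positivity) hpos

theorem IsDigitTuple.lintegral_digitSignifOfFract {n : ℕ} {d : Fin n → ℕ}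
    (hd : IsDigitTuple n d) (hn : 1 ≤ n) :
    ∫⁻ u in Set.Ico 0 1, ENNReal.ofReal (digitSignifOfFract n d u)
      = ENNReal.ofReal ((10 : ℝ) ^ ((1 : ℤ) - (n : ℤ)) / log 10) := by
  rw [digitSignifOfFract, hd.setOf_floor_eq_digitVal hn]
  have h10 : (10 : ℝ) ^ n = 10 * 10 ^ (n - 1) := by rw [← pow_succ', Nat.sub_add_cancel hn]
  have hcx : (10 : ℝ) ^ (n - 1) ≤ digitVal n d := by exact_mod_cast hd.pow_le_digitVal hn
  have hx1 : (digitVal n d + 1 : ℝ) ≤ 10 * 10 ^ (n - 1) :=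
    h10 ▸ by exact_mod_cast hd.digitVal_lt_pow
  set x : ℝ := (digitVal n d : ℝ)
  set c : ℝ := (10 : ℝ) ^ (n - 1)
  have hc : 0 < c := by positivity
  have hsub : Set.Ico (logb 10 (x / c)) (logb 10 ((x + 1) / c)) ⊆ Set.Ico 0 1 :=
    Set.Ico_subset_Ico (logb_nonneg (by norm_num) ((one_le_div hc).2 hcx))
      ((logb_le_iff_le_rpow (by norm_num) (by positivity)).2
        (by rw [rpow_one, div_le_iff₀ hc]; linarith))
  have hint : IntegrableOn (fun u : ℝ => (10 : ℝ) ^ u)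
      (Set.Ico (logb 10 (x / c)) (logb 10 ((x + 1) / c))) :=
    ((continuous_const_rpow (by norm_num)).integrableOn_Icc).mono_set Set.Ico_subset_Icc_self
  change ∫⁻ u in _, (ENNReal.ofReal ∘ _) u = _
  rw [← Set.indicator_comp_of_zero ENNReal.ofReal_zero, lintegral_indicator measurableSet_Ico,
    Measure.restrict_restrict measurableSet_Ico, Set.inter_eq_self_of_subset_left hsub,
    Function.comp_def,
    ← ofReal_integral_eq_lintegral_ofReal hint (ae_of_all _ fun u => by positivity),
    integral_rpow_Ico_logb (by norm_num) (div_pos (by linarith) hc) (by gcongr; linarith)]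
  rw [zpow_sub₀ (by norm_num), zpow_one, zpow_natCast, h10]
  congr 1
  field_simp
  ring

theorem expSignifSum_of_benford_general {Ω : Type*} [MeasurableSpace Ω]
    (P : Measure Ω) (Y : Ω → ℝ) (hY : Measurable Y)
    (g : ℝ → ℝ) (hg0 : ∀ x, 0 ≤ g x) (hgInt : Integrable g)
    (hgpdf : P.map (fun ω => Real.logb 10 (Y ω))
      = volume.withDensity (fun x => ENNReal.ofReal (g x)))
    (hwrap : ∀ᵐ x ∂(volume.restrict (Set.Ico (0 : ℝ) 1)),
      (∑' k : ℤ, g (x + (k : ℝ))) = 1)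
    (n : ℕ) (hn : 1 ≤ n) (d : Fin n → ℕ) (hd : IsDigitTuple n d) :
    expSignifSum P Y n d = (10 : ℝ) ^ ((1 : ℤ) - (n : ℤ)) / Real.log 10 := by
  have hX : Measurable fun ω => logb 10 (Y ω) := hY.log.div_const _
  have hF := measurable_digitSignifOfFract n d
  calc expSignifSum P Y n d = ∫ ω, digitSignifOfFract n d (Int.fract (logb 10 (Y ω))) ∂P :=
        integral_congr_ae (.of_forall fun ω => indicator_hasFirstDigits_signif n d (Y ω))
    _ = (∫⁻ ω, ENNReal.ofReal (digitSignifOfFract n d (Int.fract (logb 10 (Y ω)))) ∂P).toReal :=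
        integral_eq_lintegral_of_nonneg_ae (ae_of_all _ fun _ => digitSignifOfFract_nonneg n d _)
          (hF.comp (measurable_fract.comp hX)).aestronglyMeasurable
    _ = (∫⁻ u in Set.Ico 0 1, ENNReal.ofReal (digitSignifOfFract n d u)).toReal := by
        rw [← lintegral_map (f := fun x => ENNReal.ofReal (digitSignifOfFract n d (Int.fract x)))
          (hF.comp measurable_fract).ennreal_ofReal hX, hgpdf,
          lintegral_comp_fract_withDensity_of_tsum_eq_one hg0 hgInt.aemeasurable hwrap
            hF.ennreal_ofReal]
    _ = (10 : ℝ) ^ ((1 : ℤ) - (n : ℤ)) / log 10 := by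
        rw [hd.lintegral_digitSignifOfFract hn, ENNReal.toReal_ofReal (by positivity)]

/-- **Sum invariance of Benford variables.**
If `X = log₁₀ Y` has probability density `g` whose wrapping
`g†(x) = Σ_{k ∈ ℤ} g(x + k)` equals `1` for a.e. `x ∈ [0,1)` (i.e. `Y` is
Benford), then for every `n ≥ 1` and every digit tuple `d₁, …, dₙ`,
`E[S_{d₁⋯dₙ} Y] = 10^(1−n) / ln 10`, independently of the digit tuple. -/
theorem expSignifSum_of_benford {Ω : Type*} [MeasurableSpace Ω]
    (P : Measure Ω) [IsProbabilityMeasure P] (Y : Ω → ℝ) (hY : Measurable Y)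
    (hYpos : ∀ ω, 0 < Y ω) (g : ℝ → ℝ) (hg0 : ∀ x, 0 ≤ g x) (hgInt : Integrable g)
    (hgpdf : P.map (fun ω => Real.logb 10 (Y ω))
      = volume.withDensity (fun x => ENNReal.ofReal (g x)))
    (hwrap : ∀ᵐ x ∂(volume.restrict (Set.Ico (0 : ℝ) 1)),
      (∑' k : ℤ, g (x + (k : ℝ))) = 1)
    (n : ℕ) (hn : 1 ≤ n) (d : Fin n → ℕ) (hd : IsDigitTuple n d) :
    expSignifSum P Y n d = (10 : ℝ) ^ ((1 : ℤ) - (n : ℤ)) / Real.log 10 :=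
  expSignifSum_of_benford_general P Y hY g hg0 hgInt hgpdf hwrap n hn d hd
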